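/- Let 0 ≤ l < k ≤ n and let θ ≥ μ be real constants with θ > 0. There exists a constant c > 0 depending only on n, k, l, θ such that for every λ ∈ Γ_k and every index i ∈ {1,…,n}, F^{ii}(λ) ≥ c · Σ_{j ≠ i} σ_{k−1}(λ|j)σ_l(λ|j) / σ_l(λ)². -/

import Mathlib

/-- The `m`-th elementary symmetric polynomial of `lam : Fin n → ℝ`. -/
noncomputable def esymm (n m : ℕ) (lam : Fin n → ℝ) : ℝ :=
  ∑ s ∈ Finset.univ.powersetCard m, ∏ i ∈ s, lam i

/-- `σ_{l-1}` with the convention `σ_{-1} = 0`. -/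
noncomputable def esymmPred (n l : ℕ) (lam : Fin n → ℝ) : ℝ :=
  if l = 0 then 0 else esymm n (l - 1) lam

/-- The Gårding cone `Γ_k`. -/
def GammaK (n k : ℕ) : Set (Fin n → ℝ) :=
  {lam | ∀ j, 1 ≤ j → j ≤ k → 0 < esymm n j lam}

/-- `G^{jj} = ∂(σ_k/σ_l)/∂λ_j`. -/
noncomputable def Gjj (n k l : ℕ) (lam : Fin n → ℝ) (j : Fin n) : ℝ :=
  (esymm n (k - 1) (Function.update lam j 0) * esymm n l lam
      - esymm n k lam * esymmPred n l (Function.update lam j 0)) / (esymm n l lam) ^ 2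

/-- `F^{ii} = θ Σ_j G^{jj} − μ G^{ii}`. -/
noncomputable def Fii (n k l : ℕ) (θ μ : ℝ) (lam : Fin n → ℝ) (i : Fin n) : ℝ :=
  θ * ∑ j, Gjj n k l lam j - μ * Gjj n k l lam i

/-- Gradient vector of `u` at `x`. -/
noncomputable def pgrad (n : ℕ) (u : (Fin n → ℝ) → ℝ) (x : Fin n → ℝ) : Fin n → ℝ :=
  fun i => fderiv ℝ u x (Pi.single i 1)

/-- Hessian matrix of `u` at `x`. -/
noncomputable def hessMat (n : ℕ) (u : (Fin n → ℝ) → ℝ) (x : Fin n → ℝ) :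
    Matrix (Fin n) (Fin n) ℝ :=
  Matrix.of fun i j => iteratedFDeriv ℝ 2 u x ![Pi.single i 1, Pi.single j 1]

/-- Hessian matrix of `u` at `x` computed with derivatives within `s`. -/
noncomputable def hessMatWithin (n : ℕ) (u : (Fin n → ℝ) → ℝ) (s : Set (Fin n → ℝ))
    (x : Fin n → ℝ) : Matrix (Fin n) (Fin n) ℝ :=
  Matrix.of fun i j => iteratedFDerivWithin ℝ 2 u s x ![Pi.single i 1, Pi.single j 1]

/-- `η[u] = (Δu) I − D²u`. -/
noncomputable def etaMat (n : ℕ) (u : (Fin n → ℝ) → ℝ) (x : Fin n → ℝ) :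
    Matrix (Fin n) (Fin n) ℝ :=
  Matrix.trace (hessMat n u x) • (1 : Matrix (Fin n) (Fin n) ℝ) - hessMat n u x

/-- Euclidean ball in `Fin n → ℝ`. -/
def EBall (n : ℕ) (c : Fin n → ℝ) (r : ℝ) : Set (Fin n → ℝ) :=
  {x | ∑ i, (x i - c i) ^ 2 < r ^ 2}

/-- `W = √(1+|Du|²)`. -/
noncomputable def Wgraph (n : ℕ) (u : (Fin n → ℝ) → ℝ) (x : Fin n → ℝ) : ℝ :=
  Real.sqrt (1 + ∑ i, (pgrad n u x i) ^ 2)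

/-- Matrix similar to `A = W⁻¹ g^{-1/2} D²u g^{-1/2}`, namely `W⁻¹ g⁻¹ D²u`. -/
noncomputable def shapeMat (n : ℕ) (u : (Fin n → ℝ) → ℝ) (x : Fin n → ℝ) :
    Matrix (Fin n) (Fin n) ℝ :=
  (Wgraph n u x)⁻¹ •
    ((1 + Matrix.vecMulVec (pgrad n u x) (pgrad n u x))⁻¹ * hessMat n u x)

/-!
The numerator of `G^{jj}` equals `σ_{k-1}(λ|j) σ_l(λ|j) - σ_k(λ|j) σ_{l-1}(λ|j)`, and for `λ ∈ Γ_k`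
all `σ_m(λ|j)` with `m < k` are positive. The Newton–Maclaurin inequality
`k (n-l+1) σ_k σ_{l-1} ≤ l (n-k+1) σ_{k-1} σ_l` therefore bounds every `G^{jj}` below by
`(k-l)(n+1) / (k(n-l+1))` times `σ_{k-1}(λ|j) σ_l(λ|j) / σ_l(λ)²`. Since `θ ≥ μ`, the term
`-μ G^{ii}` is absorbed by `θ G^{ii} ≥ 0`. Newton's inequalities themselves come from Rolle's
theorem: a real-rooted polynomial stays real-rooted under differentiation and reversal, and a
real-rooted quadratic has a nonnegative discriminant.
-/

open Finset
open scoped Nat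

theorem Nat.cast_add_descFactorial {K : Type*} [Field K] [CharZero K] (t k : ℕ) :
    ((t + k).descFactorial k : K) = (t + k)! / t ! := by
  have h := Nat.factorial_mul_descFactorial (Nat.le_add_left k t)
  rw [Nat.add_sub_cancel] at h
  rw [eq_div_iff (Nat.cast_ne_zero.2 t.factorial_ne_zero), mul_comm]
  exact_mod_cast h

namespace Polynomial

theorem Splits.derivative {p : ℝ[X]} (hp : p.Splits) : (Polynomial.derivative p).Splits := by
  rw [splits_iff_card_roots] at hp ⊢
  have h₁ := card_roots_le_derivative p
  have h₂ := card_roots' (Polynomial.derivative p)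
  have h₃ := natDegree_derivative_le p
  omega

theorem Splits.iterate_derivative {p : ℝ[X]} (hp : p.Splits) (k : ℕ) :
    (Polynomial.derivative^[k] p).Splits := by
  induction k with
  | zero => exact hp
  | succ k ih => rw [Function.iterate_succ_apply']; exact ih.derivative

theorem Splits.reverse {K : Type*} [Field K] {p : K[X]} (hp : p.Splits) : p.reverse.Splits := by
  induction hp using Submonoid.closure_induction with
  | mem f hf =>
    refine Splits.of_natDegree_le_one <| (reverse_natDegree_le f).trans ?_
    rcases hf with ⟨a, rfl⟩ | ⟨a, rfl⟩ <;> simp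
  | one => exact Splits.of_natDegree_le_one <| (reverse_natDegree_le 1).trans (by simp)
  | mul f g _ _ hf hg => rw [reverse_mul_of_domain]; exact hf.mul hg

theorem Splits.discrim_nonneg {K : Type*} [Field K] [LinearOrder K] [IsStrictOrderedRing K]
    {p : K[X]} (hp : p.Splits) (h2 : p.natDegree = 2) :
    0 ≤ discrim (p.coeff 2) (p.coeff 1) (p.coeff 0) := by
  obtain ⟨x, hx⟩ := hp.exists_eval_eq_zero
    (by rw [degree_eq_natDegree (ne_zero_of_natDegree_gt (n := 0) (by omega)), h2]; decide)
  rw [eval_eq_sum_range, h2] at hx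
  simp only [sum_range_succ, sum_range_zero, pow_zero, pow_one, zero_add, mul_one] at hx
  rw [discrim_eq_sq_of_quadratic_eq_zero (x := x) (by linear_combination hx)]
  positivity

variable {R : Type*} [CommRing R] [IsDomain R] [CharZero R]

theorem natDegree_iterate_derivative_of_natDegree_eq {p : R[X]} {i d : ℕ}
    (hp : p.natDegree = i + d) : (Polynomial.derivative^[i] p).natDegree = d := by
  refine le_antisymm ((natDegree_iterate_derivative p i).trans (by omega)) ?_
  rcases Nat.eq_zero_or_pos d with rfl | hd
  · exact Nat.zero_le _
  have hp0 : p ≠ 0 := ne_zero_of_natDegree_gt (n := 0) (by omega)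
  refine le_natDegree_of_ne_zero ?_
  rw [coeff_iterate_derivative, nsmul_eq_mul, add_comm d i, ← hp]
  exact mul_ne_zero (by exact_mod_cast (Nat.descFactorial_pos.2 (by omega)).ne')
    (leadingCoeff_ne_zero.2 hp0)

theorem coeff_iterate_derivative_reverse_iterate_derivative {p : R[X]} {i a s : ℕ}
    (hp : p.natDegree = i + (a + s)) {t : ℕ} (ht : t ≤ s) :
    (Polynomial.derivative^[a] (Polynomial.derivative^[i] p).reverse).coeff t
      = ((t + a).descFactorial a * (s - t + i).descFactorial i : ℕ) * p.coeff (s - t + i) := by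
  rw [coeff_iterate_derivative, coeff_reverse, natDegree_iterate_derivative_of_natDegree_eq hp,
    revAt_le (by omega), show a + s - (t + a) = s - t by omega, coeff_iterate_derivative,
    smul_smul, nsmul_eq_mul]

/-- Differentiating `i` times, reversing and differentiating `a` times leaves a real-rooted
quadratic whose coefficients are multiples of `p.coeff i`, `p.coeff (i + 1)`, `p.coeff (i + 2)`. -/
theorem Splits.newton_coeff {p : ℝ[X]} (hp : p.Splits) {i a : ℕ}
    (hdeg : p.natDegree = i + (a + 2)) :
    ((i : ℝ) + 2) * ((a : ℝ) + 2) * (p.coeff i * p.coeff (i + 2))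
      ≤ ((i : ℝ) + 1) * ((a : ℝ) + 1) * p.coeff (i + 1) ^ 2 := by
  by_cases hpi : p.coeff i = 0
  · rw [hpi, zero_mul, mul_zero]; positivity
  set q := Polynomial.derivative^[a] (Polynomial.derivative^[i] p).reverse
  have hq := fun t ht => coeff_iterate_derivative_reverse_iterate_derivative (t := t) hdeg ht
  have hq0 : q.coeff 0 = _ := hq 0 (by norm_num)
  have hq1 : q.coeff 1 = _ := hq 1 (by norm_num)
  have hq2 : q.coeff 2 = _ := hq 2 (by norm_num)
  norm_num [show 2 - 1 + i = 1 + i by omega, Nat.descFactorial_self] at hq0 hq1 hq2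
  have hqdeg : q.natDegree = 2 := by
    refine le_antisymm ((natDegree_iterate_derivative _ a).trans ?_) (le_natDegree_of_ne_zero ?_)
    · have := reverse_natDegree_le (Polynomial.derivative^[i] p)
      rw [natDegree_iterate_derivative_of_natDegree_eq hdeg] at this
      omega
    · rw [hq2]
      exact mul_ne_zero (mul_ne_zero (by exact_mod_cast (Nat.descFactorial_pos.2 (by omega)).ne')
        (by positivity)) hpi
  have hdisc := ((hp.iterate_derivative i).reverse.iterate_derivative a).discrim_nonneg hqdeg
  rw [discrim, hq0, hq1, hq2, Nat.cast_add_descFactorial 1 a, Nat.cast_add_descFactorial 2 a,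
    Nat.cast_add_descFactorial 1 i, Nat.cast_add_descFactorial 2 i] at hdisc
  simp only [Nat.add_comm _ a, Nat.add_comm _ i, Nat.factorial_succ, Nat.cast_mul] at hdisc
  have hZ : 0 < ((a : ℝ) + 1) * ((i : ℝ) + 1) * ((a ! : ℝ) * i !) ^ 2 := by positivity
  refine sub_nonneg.1 (nonneg_of_mul_nonneg_right ?_ hZ)
  convert hdisc using 1
  push_cast
  field_simp
  ring

end Polynomial

theorem Multiset.esymm_cons_succ {R : Type*} [CommSemiring R] (a : R) (s : Multiset R) (m : ℕ) :
    (a ::ₘ s).esymm (m + 1) = s.esymm (m + 1) + a * s.esymm m := by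
  simp only [Multiset.esymm, Multiset.powersetCard_cons, Multiset.map_add, Multiset.sum_add,
    Multiset.map_map, Function.comp_def, Multiset.prod_cons, Multiset.sum_map_mul_left]

theorem Multiset.esymm_zero_cons {R : Type*} [CommSemiring R] (s : Multiset R) (m : ℕ) :
    (0 ::ₘ s).esymm m = s.esymm m := by
  cases m with
  | zero => simp [Multiset.esymm]
  | succ m => rw [Multiset.esymm_cons_succ, zero_mul, add_zero]

theorem esymm_zero (n : ℕ) (lam : Fin n → ℝ) : esymm n 0 lam = 1 := by
  simp [esymm]

theorem esymm_eq_esymm_cons {n : ℕ} (m : ℕ) (lam : Fin n → ℝ) (i : Fin n) :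
    esymm n m lam = (lam i ::ₘ (univ.erase i).val.map lam).esymm m := by
  rw [← Multiset.map_cons lam, Finset.erase_val, Multiset.cons_erase (mem_univ_val i),
    Finset.esymm_map_val]
  rfl

theorem esymm_update_zero {n : ℕ} (m : ℕ) (lam : Fin n → ℝ) (i : Fin n) :
    esymm n m (Function.update lam i 0) = ((univ.erase i).val.map lam).esymm m := by
  rw [esymm_eq_esymm_cons m _ i, Function.update_self, Multiset.esymm_zero_cons]
  congr 1
  refine Multiset.map_congr rfl fun j hj => ?_
  exact Function.update_of_ne (ne_of_mem_erase (s := univ) (mem_def.2 hj)) _ _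

theorem esymm_succ_eq_update {n : ℕ} (m : ℕ) (lam : Fin n → ℝ) (i : Fin n) :
    esymm n (m + 1) lam
      = esymm n (m + 1) (Function.update lam i 0)
        + lam i * esymm n m (Function.update lam i 0) := by
  rw [esymm_eq_esymm_cons _ _ i, Multiset.esymm_cons_succ, esymm_update_zero, esymm_update_zero]

theorem esymm_mul_esymm_add_two_le_sq {n m : ℕ} (hm : m + 2 ≤ n) (ν : Fin n → ℝ) :
    ((m : ℝ) + 2) * ((n : ℝ) - m) * (esymm n m ν * esymm n (m + 2) ν)
      ≤ ((m : ℝ) + 1) * ((n : ℝ) - m - 1) * esymm n (m + 1) ν ^ 2 := by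
  open Polynomial in
  set P : ℝ[X] := ∏ j, (X + C (ν j))
  have hP : P.Splits := Splits.prod fun j _ => Splits.X_add_C _
  have hdeg : P.natDegree = n := by
    rw [natDegree_prod_of_monic _ _ fun j _ => monic_X_add_C _]
    simp
  have hcoeff : ∀ t ≤ n, P.coeff t = esymm n (n - t) ν := fun t ht => by
    rw [Finset.prod_X_add_C_coeff _ _ (by simpa using ht), card_univ, Fintype.card_fin]
    rfl
  obtain ⟨i, rfl⟩ : ∃ i, n = i + (m + 2) := ⟨n - (m + 2), by omega⟩
  have h := hP.newton_coeff (i := i) (a := m) hdeg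
  rw [hcoeff i (by omega), hcoeff (i + 1) (by omega), hcoeff (i + 2) (by omega),
    show i + (m + 2) - i = m + 2 by omega, show i + (m + 2) - (i + 1) = m + 1 by omega,
    show i + (m + 2) - (i + 2) = m by omega] at h
  push_cast
  linear_combination h

-- Newton's inequality says that `(j + 1) σ_{j+1} / ((n - j) σ_j)` is antitone in `j`.
theorem esymm_mul_esymm_le_of_le {n p q : ℕ} (hpq : p ≤ q) {ν : Fin n → ℝ} (hqn : q < n)
    (hpos : ∀ j ≤ q + 1, 0 < esymm n j ν) :
    ((q : ℝ) + 1) * ((n : ℝ) - p) * (esymm n (q + 1) ν * esymm n p ν)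
      ≤ ((p : ℝ) + 1) * ((n : ℝ) - q) * (esymm n q ν * esymm n (p + 1) ν) := by
  induction q, hpq using Nat.le_induction with
  | base => linarith
  | succ q hpq ih =>
    have ih := ih (by omega) fun j hj => hpos j (by omega)
    have hnewton := esymm_mul_esymm_add_two_le_sq (m := q) (by omega) ν
    have h₁ : 0 < ((q : ℝ) + 1) * esymm n (q + 1) ν := mul_pos (by positivity) (hpos _ (by omega))
    have h₂ : 0 ≤ ((q : ℝ) + 2) * esymm n (q + 2) ν := mul_nonneg (by positivity) (hpos _ le_rfl).le
    have h₃ : 0 ≤ ((p : ℝ) + 1) * esymm n (p + 1) ν :=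
      mul_nonneg (by positivity) (hpos _ (by omega)).le
    refine le_of_mul_le_mul_left ?_ h₁
    push_cast
    nlinarith [mul_le_mul_of_nonneg_left ih h₂, mul_le_mul_of_nonneg_left hnewton h₃]

theorem esymm_pos_of_mem_GammaK {n k m : ℕ} {lam : Fin n → ℝ} (hlam : lam ∈ GammaK n k)
    (hm : m ≤ k) : 0 < esymm n m lam := by
  rcases Nat.eq_zero_or_pos m with rfl | hm0
  · rw [esymm_zero]; exact one_pos
  · exact hlam m hm0 hm

theorem esymm_update_pos_of_mem_GammaK {n k : ℕ} (hkn : k ≤ n) {lam : Fin n → ℝ}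
    (hlam : lam ∈ GammaK n k) (i : Fin n) : ∀ m < k, 0 < esymm n m (Function.update lam i 0) := by
  induction k with
  | zero => omega
  | succ k ih =>
    have ih := ih (by omega) fun j hj hjk => hlam j hj (by omega)
    intro m hm
    rcases Nat.lt_or_ge m k with hmk | hmk
    · exact ih m hmk
    obtain rfl : m = k := by omega
    rcases m with _ | j
    · rw [esymm_zero]; exact one_pos
    set ν := Function.update lam i 0
    have ha := ih j (Nat.lt_succ_self j)
    have h₁ := esymm_pos_of_mem_GammaK hlam (m := j + 1) (by omega)
    have h₂ := esymm_pos_of_mem_GammaK hlam (m := j + 2) le_rfl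
    rw [esymm_succ_eq_update _ _ i] at h₁ h₂
    have hnewton := esymm_mul_esymm_add_two_le_sq (m := j) (by omega) ν
    -- `σ_{j+1}(λ), σ_{j+2}(λ) > 0` with `σ_{j+1}(λ|i) ≤ 0` would violate Newton's inequality.
    by_contra! hb
    have hac : esymm n (j + 1) ν ^ 2 < esymm n j ν * esymm n (j + 2) ν := by
      nlinarith [mul_pos ha h₂, mul_nonneg (neg_nonneg.2 hb) h₁.le]
    have hα : ((j : ℝ) + 1) * ((n : ℝ) - j - 1) ≤ ((j : ℝ) + 2) * ((n : ℝ) - j) := by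
      nlinarith
    have hn : (j : ℝ) + 2 ≤ n := by exact_mod_cast hkn
    nlinarith [mul_lt_mul_of_pos_left hac (show 0 < ((j : ℝ) + 2) * ((n : ℝ) - j) by nlinarith),
      mul_le_mul_of_nonneg_right hα (sq_nonneg (esymm n (j + 1) ν))]

theorem Gjj_eq {n k : ℕ} (hk : 1 ≤ k) (l : ℕ) (lam : Fin n → ℝ) (j : Fin n) :
    Gjj n k l lam j =
      (esymm n (k - 1) (Function.update lam j 0) * esymm n l (Function.update lam j 0)
        - esymm n k (Function.update lam j 0) * esymmPred n l (Function.update lam j 0))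
        / esymm n l lam ^ 2 := by
  obtain ⟨k, rfl⟩ : ∃ k', k = k' + 1 := ⟨k - 1, by omega⟩
  rw [Gjj, esymm_succ_eq_update k lam j, Nat.add_sub_cancel]
  rcases l with _ | l
  · simp [esymmPred, esymm_zero]
  · rw [esymmPred, if_neg l.succ_ne_zero, Nat.add_sub_cancel, esymm_succ_eq_update l lam j]
    ring

theorem esymm_mul_esymmPred_le {n k l : ℕ} (hlk : l < k) (hkn : k ≤ n) {ν : Fin n → ℝ}
    (hν : ∀ m < k, 0 < esymm n m ν) :
    (k : ℝ) * ((n : ℝ) - l + 1) * (esymm n k ν * esymmPred n l ν)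
      ≤ (l : ℝ) * ((n : ℝ) - k + 1) * (esymm n (k - 1) ν * esymm n l ν) := by
  rcases l with _ | p
  · simp [esymmPred]
  obtain ⟨q, rfl⟩ : ∃ q, k = q + 1 := ⟨k - 1, by omega⟩
  rw [esymmPred, if_neg p.succ_ne_zero, Nat.add_sub_cancel, Nat.add_sub_cancel]
  have hp := hν p (by omega)
  have hPpos : 0 < esymm n q ν * esymm n (p + 1) ν := mul_pos (hν q (by omega)) (hν _ (by omega))
  have hn : (q : ℝ) + 1 ≤ n := by exact_mod_cast hkn
  have hpq : (p : ℝ) < q := by exact_mod_cast (by omega : p < q)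
  rcases le_or_gt (esymm n (q + 1) ν) 0 with hk | hk
  · have hl : (0 : ℝ) ≤ ((p + 1 : ℕ) : ℝ) * ((n : ℝ) - (q + 1 : ℕ) + 1) :=
      mul_nonneg (by positivity) (by push_cast; linarith)
    have hk' : (0 : ℝ) ≤ ((q + 1 : ℕ) : ℝ) * ((n : ℝ) - (p + 1 : ℕ) + 1) :=
      mul_nonneg (by positivity) (by push_cast; linarith)
    exact (mul_nonpos_of_nonneg_of_nonpos hk' (mul_nonpos_of_nonpos_of_nonneg hk hp.le)).trans
      (mul_nonneg hl hPpos.le)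
  · have hpos : ∀ j ≤ q + 1, 0 < esymm n j ν := fun j hj =>
      (Nat.lt_or_eq_of_le hj).elim (hν j) (· ▸ hk)
    have h := esymm_mul_esymm_le_of_le (by omega : p ≤ q) (by omega) hpos
    push_cast
    linear_combination h

theorem mul_div_le_Gjj {n k l : ℕ} (hlk : l < k) (hkn : k ≤ n) {lam : Fin n → ℝ}
    (hlam : lam ∈ GammaK n k) (j : Fin n) :
    ((k : ℝ) - l) * (n + 1) / (k * (n - l + 1))
        * (esymm n (k - 1) (Function.update lam j 0) * esymm n l (Function.update lam j 0)
          / esymm n l lam ^ 2)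
      ≤ Gjj n k l lam j := by
  have hν := esymm_update_pos_of_mem_GammaK hkn hlam j
  have h := esymm_mul_esymmPred_le hlk hkn hν
  have hσ : 0 < esymm n l lam ^ 2 := pow_pos (esymm_pos_of_mem_GammaK hlam hlk.le) 2
  have hk : (0 : ℝ) < k * (n - l + 1) := by
    have : (l : ℝ) < k := by exact_mod_cast hlk
    have : (k : ℝ) ≤ n := by exact_mod_cast hkn
    nlinarith
  -- `k (n - l + 1) - l (n - k + 1) = (k - l) (n + 1)`
  rw [Gjj_eq (by omega), ← mul_div_assoc, div_le_div_iff_of_pos_right hσ, div_mul_eq_mul_div,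
    div_le_iff₀ hk]
  linear_combination h

theorem stmt7 (n k l : ℕ) (hlk : l < k) (hkn : k ≤ n)
    (θ μ : ℝ) (hθμ : μ ≤ θ) (hθ : 0 < θ) :
    ∃ c : ℝ, 0 < c ∧
      ∀ lam ∈ GammaK n k, ∀ i : Fin n,
        c * ((∑ j ∈ Finset.univ.erase i,
              esymm n (k - 1) (Function.update lam j 0) * esymm n l (Function.update lam j 0))
            / (esymm n l lam) ^ 2)
          ≤ Fii n k l θ μ lam i := by
  set c₀ : ℝ := ((k : ℝ) - l) * (n + 1) / (k * (n - l + 1))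
  have hc₀ : 0 < c₀ := by
    have : (l : ℝ) < k := by exact_mod_cast hlk
    have : (k : ℝ) ≤ n := by exact_mod_cast hkn
    have : (0 : ℝ) < k * (n - l + 1) := by nlinarith
    positivity
  refine ⟨θ * c₀, mul_pos hθ hc₀, fun lam hlam i => ?_⟩
  have hG := mul_div_le_Gjj hlk hkn hlam
  have hGi : 0 ≤ Gjj n k l lam i := by
    have hν := esymm_update_pos_of_mem_GammaK hkn hlam i
    exact le_trans (mul_nonneg hc₀.le (div_nonneg (mul_pos (hν _ (by omega)) (hν _ hlk)).le
      (sq_nonneg _))) (hG i)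
  calc θ * c₀ * ((∑ j ∈ univ.erase i, esymm n (k - 1) (Function.update lam j 0)
          * esymm n l (Function.update lam j 0)) / esymm n l lam ^ 2)
      = θ * ∑ j ∈ univ.erase i, c₀ * (esymm n (k - 1) (Function.update lam j 0)
          * esymm n l (Function.update lam j 0) / esymm n l lam ^ 2) := by
        simp only [Finset.sum_div, Finset.mul_sum, mul_assoc]
    _ ≤ θ * ∑ j ∈ univ.erase i, Gjj n k l lam j := by gcongr with j; exact hG j
    _ ≤ θ * ∑ j ∈ univ.erase i, Gjj n k l lam j + (θ - μ) * Gjj n k l lam i :=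
        le_add_of_nonneg_right (mul_nonneg (sub_nonneg.2 hθμ) hGi)
    _ = Fii n k l θ μ lam i := by
        rw [Fii, ← Finset.add_sum_erase _ _ (mem_univ i)]
        ring
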